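/- For piecewise H¹ functions w, v on a partition of the periodic interval I = (0, 2π) and weights θ₁, θ₂ ∈ ℝ, the DG operators satisfy the generalized skew-symmetry identity H^{θ₁}(w, v) + H^{θ₂}(v, w) = ((1-θ₂) - θ₁) Σ_{j=1}^{N} [w]_{j-1/2} [v]_{j-1/2}. -/

import Mathlib

/-!
Summation by parts over the periodic nodes rewrites `H^α(w, v)` as
`Σ_j ∫_{I_j} w v_x + Σ_j w^{(α)}_{j+1/2} [v]_{j+1/2}`, and integration by parts on each cell turns
`Σ_j ∫_{I_j} (w v_x + v w_x)` into `-Σ_j [w v]_{j+1/2}`. What remains is, node by node, the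
identity `w^{(θ₁)} [v] + v^{(θ₂)} [w] = [w v] + ((1 - θ₂) - θ₁) [w] [v]`.
-/

open scoped BigOperators

/-- Left (minus-side) trace of the piecewise function `w` at the node `x_{j+1/2}`
(node indexed by `j : Fin N`, located at the right endpoint of cell `j`). -/
def dgTraceM (N : ℕ) [NeZero N] (x : Fin (N + 1) → ℝ) (w : Fin N → ℝ → ℝ) (j : Fin N) : ℝ :=
  w j (x j.succ)

/-- Right (plus-side) trace of `w` at the node `x_{j+1/2}`, taken from the next cell
(periodic identification: cell indices wrap modulo `N`). -/
def dgTraceP (N : ℕ) [NeZero N] (x : Fin (N + 1) → ℝ) (w : Fin N → ℝ → ℝ) (j : Fin N) : ℝ :=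
  w (j + 1) (x (j + 1 : Fin N).castSucc)

/-- The DG operator `H^α(w, v) = Σ_j ( ∫_{I_j} w v_x − w^{(α)}_{j+1/2} v^-_{j+1/2}
+ w^{(α)}_{j-1/2} v^+_{j-1/2} )`, where `w^{(α)} = α w^- + (1-α) w^+`. -/
noncomputable def dgH (N : ℕ) [NeZero N] (x : Fin (N + 1) → ℝ) (α : ℝ) (w v v' : Fin N → ℝ → ℝ) : ℝ :=
  ∑ j : Fin N,
    ((∫ t in (x j.castSucc)..(x j.succ), w j t * v' j t)
      - (α * dgTraceM N x w j + (1 - α) * dgTraceP N x w j) * dgTraceM N x v j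
      + (α * dgTraceM N x w (j - 1) + (1 - α) * dgTraceP N x w (j - 1)) *
          dgTraceP N x v (j - 1))

open Finset

theorem integral_mul_deriv_add_integral_mul_deriv {a b : ℝ} (hab : a ≤ b)
    {f g f' g' : ℝ → ℝ} (hf : ∀ t ∈ Set.Icc a b, HasDerivAt f (f' t) t)
    (hg : ∀ t ∈ Set.Icc a b, HasDerivAt g (g' t) t)
    (hfg' : IntervalIntegrable (fun t => f t * g' t) MeasureTheory.volume a b)
    (hgf' : IntervalIntegrable (fun t => g t * f' t) MeasureTheory.volume a b) :
    (∫ t in a..b, f t * g' t) + (∫ t in a..b, g t * f' t) = f b * g b - f a * g a := by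
  rw [← intervalIntegral.integral_add hfg' hgf']
  refine intervalIntegral.integral_eq_sub_of_hasDerivAt (f := fun t => f t * g t)
    (fun t ht => ?_) (hfg'.add hgf')
  rw [Set.uIcc_of_le hab] at ht
  exact ((hf t ht).mul (hg t ht)).congr_deriv (by ring)

theorem Fin.sum_comp_sub_one {M : Type*} [AddCommMonoid M] {N : ℕ} [NeZero N]
    (f : Fin N → M) : ∑ j, f (j - 1) = ∑ j, f j :=
  (Equiv.subRight 1).sum_comp f

/-- `[w]_{j+1/2}` -/
def dgJump (N : ℕ) [NeZero N] (x : Fin (N + 1) → ℝ) (w : Fin N → ℝ → ℝ) (j : Fin N) : ℝ :=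
  dgTraceP N x w j - dgTraceM N x w j

/-- `w^{(α)}_{j+1/2}` -/
def dgFlux (N : ℕ) [NeZero N] (x : Fin (N + 1) → ℝ) (α : ℝ) (w : Fin N → ℝ → ℝ) (j : Fin N) :
    ℝ :=
  α * dgTraceM N x w j + (1 - α) * dgTraceP N x w j

section DG

variable {N : ℕ} [NeZero N] {x : Fin (N + 1) → ℝ}

theorem dgTraceP_sub_one (w : Fin N → ℝ → ℝ) (j : Fin N) :
    dgTraceP N x w (j - 1) = w j (x j.castSucc) := by
  simp only [dgTraceP, sub_add_cancel]

theorem dgH_eq_sum_integral_add_sum_dgFlux_mul_dgJump (α : ℝ) (w v v' : Fin N → ℝ → ℝ) :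
    dgH N x α w v v' =
      ∑ j, (∫ t in (x j.castSucc)..(x j.succ), w j t * v' j t) +
        ∑ j, dgFlux N x α w j * dgJump N x v j := by
  simp only [dgH, dgFlux, dgJump, sum_add_distrib, sum_sub_distrib, mul_sub,
    Fin.sum_comp_sub_one (fun j => (α * dgTraceM N x w j + (1 - α) * dgTraceP N x w j) *
      dgTraceP N x v j)]
  ring

theorem sum_integral_mul_deriv_add_integral_mul_deriv_eq_neg_sum_dgJump_mul
    (hx : ∀ j : Fin N, x j.castSucc < x j.succ) {w v w' v' : Fin N → ℝ → ℝ}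
    (hw : ∀ j : Fin N, ∀ t ∈ Set.Icc (x j.castSucc) (x j.succ), HasDerivAt (w j) (w' j t) t)
    (hv : ∀ j : Fin N, ∀ t ∈ Set.Icc (x j.castSucc) (x j.succ), HasDerivAt (v j) (v' j t) t)
    (hwv : ∀ j : Fin N,
      IntervalIntegrable (fun t => w j t * v' j t) MeasureTheory.volume (x j.castSucc) (x j.succ))
    (hvw : ∀ j : Fin N,
      IntervalIntegrable (fun t => v j t * w' j t) MeasureTheory.volume (x j.castSucc) (x j.succ)) :
    ∑ j, (∫ t in (x j.castSucc)..(x j.succ), w j t * v' j t) +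
        ∑ j, (∫ t in (x j.castSucc)..(x j.succ), v j t * w' j t) =
      -∑ j, dgJump N x (w * v) j := by
  have cell : ∀ j : Fin N,
      (∫ t in (x j.castSucc)..(x j.succ), w j t * v' j t) +
          (∫ t in (x j.castSucc)..(x j.succ), v j t * w' j t) =
        dgTraceM N x (w * v) j - dgTraceP N x (w * v) (j - 1) := fun j => by
    rw [dgTraceP_sub_one]
    exact integral_mul_deriv_add_integral_mul_deriv (hx j).le (hw j) (hv j) (hwv j) (hvw j)
  rw [← sum_add_distrib, sum_congr rfl fun j _ => cell j, sum_sub_distrib,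
    Fin.sum_comp_sub_one (dgTraceP N x (w * v))]
  simp only [dgJump, sum_sub_distrib, neg_sub]

theorem dgFlux_mul_dgJump_add_dgFlux_mul_dgJump (θ₁ θ₂ : ℝ) (w v : Fin N → ℝ → ℝ) (j : Fin N) :
    dgFlux N x θ₁ w j * dgJump N x v j + dgFlux N x θ₂ v j * dgJump N x w j =
      dgJump N x (w * v) j + ((1 - θ₂) - θ₁) * (dgJump N x w j * dgJump N x v j) := by
  simp only [dgFlux, dgJump, dgTraceP, dgTraceM, Pi.mul_apply]
  ring

end DG

theorem dg_generalized_skew_symmetry_general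
    (N : ℕ) [NeZero N] (x : Fin (N + 1) → ℝ)
    (hx : ∀ j : Fin N, x j.castSucc < x j.succ)
    (θ₁ θ₂ : ℝ)
    (w v w' v' : Fin N → ℝ → ℝ)
    (hw : ∀ j : Fin N, ∀ t ∈ Set.Icc (x j.castSucc) (x j.succ),
      HasDerivAt (w j) (w' j t) t)
    (hv : ∀ j : Fin N, ∀ t ∈ Set.Icc (x j.castSucc) (x j.succ),
      HasDerivAt (v j) (v' j t) t)
    (hwv : ∀ j : Fin N,
      IntervalIntegrable (fun t => w j t * v' j t) MeasureTheory.volume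
        (x j.castSucc) (x j.succ))
    (hvw : ∀ j : Fin N,
      IntervalIntegrable (fun t => v j t * w' j t) MeasureTheory.volume
        (x j.castSucc) (x j.succ)) :
    dgH N x θ₁ w v v' + dgH N x θ₂ v w w' =
      ((1 - θ₂) - θ₁) *
        ∑ j : Fin N,
          (dgTraceP N x w (j - 1) - dgTraceM N x w (j - 1)) *
            (dgTraceP N x v (j - 1) - dgTraceM N x v (j - 1)) := by
  have integrals :=
    sum_integral_mul_deriv_add_integral_mul_deriv_eq_neg_sum_dgJump_mul hx hw hv hwv hvw
  have nodes := sum_congr rfl fun j (_ : j ∈ univ) =>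
    dgFlux_mul_dgJump_add_dgFlux_mul_dgJump (x := x) θ₁ θ₂ w v j
  rw [sum_add_distrib, sum_add_distrib, ← mul_sum] at nodes
  simp only [← dgJump.eq_1]
  rw [dgH_eq_sum_integral_add_sum_dgFlux_mul_dgJump, dgH_eq_sum_integral_add_sum_dgFlux_mul_dgJump,
    Fin.sum_comp_sub_one (fun j => dgJump N x w j * dgJump N x v j)]
  linear_combination integrals + nodes

/-- generalized skew-symmetry identity
`H^{θ₁}(w, v) + H^{θ₂}(v, w) = ((1-θ₂) - θ₁) Σ_j [w]_{j-1/2} [v]_{j-1/2}`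
for piecewise `H¹` functions on a periodic partition of `I = (0, 2π)`. -/
theorem dg_generalized_skew_symmetry
    (N : ℕ) [NeZero N] (x : Fin (N + 1) → ℝ)
    (hx : ∀ j : Fin N, x j.castSucc < x j.succ)
    (hx0 : x 0 = 0) (hx2π : x (Fin.last N) = 2 * Real.pi)
    (θ₁ θ₂ : ℝ)
    (w v w' v' : Fin N → ℝ → ℝ)
    (hw : ∀ j : Fin N, ∀ t ∈ Set.Icc (x j.castSucc) (x j.succ),
      HasDerivAt (w j) (w' j t) t)
    (hv : ∀ j : Fin N, ∀ t ∈ Set.Icc (x j.castSucc) (x j.succ),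
      HasDerivAt (v j) (v' j t) t)
    (hwv : ∀ j : Fin N,
      IntervalIntegrable (fun t => w j t * v' j t) MeasureTheory.volume
        (x j.castSucc) (x j.succ))
    (hvw : ∀ j : Fin N,
      IntervalIntegrable (fun t => v j t * w' j t) MeasureTheory.volume
        (x j.castSucc) (x j.succ)) :
    dgH N x θ₁ w v v' + dgH N x θ₂ v w w' =
      ((1 - θ₂) - θ₁) *
        ∑ j : Fin N,
          (dgTraceP N x w (j - 1) - dgTraceM N x w (j - 1)) *
            (dgTraceP N x v (j - 1) - dgTraceM N x v (j - 1)) :=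
  dg_generalized_skew_symmetry_general N x hx θ₁ θ₂ w v w' v' hw hv hwv hvw
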